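/- A switched combination of two latin squares with disjoint letter sets is itself a latin square: for latin squares A₀, A₁ of order n with disjoint letters and any switching matrix S, the function L of order 2n defined by L(i,j) = A_ε(⌊i/2⌋,⌊j/2⌋), where ε = 1 iff i + j + S(⌊i/2⌋,⌊j/2⌋) ≡ 0 mod 2, has every row and every column injective (hence bijective onto the 2n letters). -/

import Mathlib

/-!
Both the row and the column statement reduce to the row statement by transposing `A₀`, `A₁`
and `S`. In a fixed row `r`, the parity of the letter `L(r,j)` records which square was used,
and its half records the entry of that square; as rows of latin squares are injective, equal
letters force equal blocks `⌊j/2⌋`, and then the switching condition, read in `ZMod 2`, forces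
equal parities of `j`.
-/

open Function

/-- A latin square of order `n` as a function: each row and each column is injective. -/
def IsLatin {n : ℕ} (A : Fin n → Fin n → Fin n) : Prop :=
  (∀ r, Function.Injective (A r)) ∧ (∀ c, Function.Injective (fun r => A r c))

/-- The block coordinate of a row or column index. -/
def blk {n : ℕ} (i : Fin (2 * n)) : Fin n :=
  ⟨i.val / 2, by have := i.isLt; omega⟩

/-- The switched combination of two latin squares `A₀`, `A₁` of order `n` with switching
matrix `S`: letters of `A₀` are embedded as the even numbers `2k` and letters of `A₁` as
the odd numbers `2k+1` in `Fin (2n)`, and `L(i,j) = A_ε(⌊i/2⌋,⌊j/2⌋)` where `ε = 1` iff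
`i + j + S(⌊i/2⌋,⌊j/2⌋) ≡ 0 (mod 2)`. -/
def comb {n : ℕ} (A0 A1 : Fin n → Fin n → Fin n) (S : Fin n → Fin n → ZMod 2)
    (i j : Fin (2 * n)) : Fin (2 * n) :=
  if ((i.val : ZMod 2) + (j.val : ZMod 2) + S (blk i) (blk j) = 0)
    then ⟨2 * (A1 (blk i) (blk j)).val + 1, by have := (A1 (blk i) (blk j)).isLt; omega⟩
    else ⟨2 * (A0 (blk i) (blk j)).val, by have := (A0 (blk i) (blk j)).isLt; omega⟩

theorem ZMod.eq_of_eq_zero_iff_eq_zero {x y : ZMod 2} (h : x = 0 ↔ y = 0) : x = y := by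
  revert x y; decide

theorem IsLatin.transpose {n : ℕ} {A : Fin n → Fin n → Fin n} (hA : IsLatin A) :
    IsLatin (fun i j => A j i) :=
  ⟨hA.2, hA.1⟩

theorem eq_of_blk_eq_of_natCast_eq {n : ℕ} {i j : Fin (2 * n)} (hblk : blk i = blk j)
    (hpar : (i.val : ZMod 2) = (j.val : ZMod 2)) : i = j := by
  have hdiv : i.val / 2 = j.val / 2 := congrArg Fin.val hblk
  have hmod : i.val % 2 = j.val % 2 := (ZMod.natCast_eq_natCast_iff' _ _ _).mp hpar
  exact Fin.ext (by omega)

section comb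

variable {n : ℕ} (A0 A1 : Fin n → Fin n → Fin n) (S : Fin n → Fin n → ZMod 2)

theorem comb_transpose (j : Fin (2 * n)) :
    comb (fun i j => A0 j i) (fun i j => A1 j i) (fun i j => S j i) j =
      fun i => comb A0 A1 S i j :=
  funext fun i => by simp only [comb, add_comm (j.val : ZMod 2)]

theorem comb_val_mod_two_eq_one_iff (i j : Fin (2 * n)) :
    (comb A0 A1 S i j).val % 2 = 1 ↔
      (i.val : ZMod 2) + (j.val : ZMod 2) + S (blk i) (blk j) = 0 := by
  unfold comb
  split_ifs with h <;> simp only [h, iff_true, iff_false] <;> omega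

variable {A0 A1}

theorem comb_row_injective (h0 : ∀ r, Injective (A0 r)) (h1 : ∀ r, Injective (A1 r))
    (r : Fin (2 * n)) : Injective (comb A0 A1 S r) := by
  intro a b hab
  have hsw : (r.val : ZMod 2) + (a.val : ZMod 2) + S (blk r) (blk a) = 0 ↔
      (r.val : ZMod 2) + (b.val : ZMod 2) + S (blk r) (blk b) = 0 := by
    rw [← comb_val_mod_two_eq_one_iff, ← comb_val_mod_two_eq_one_iff, hab]
  have hblk : blk a = blk b := by
    by_cases ha : (r.val : ZMod 2) + (a.val : ZMod 2) + S (blk r) (blk a) = 0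
    · simp only [comb, if_pos ha, if_pos (hsw.1 ha), Fin.mk.injEq] at hab
      exact h1 (blk r) (Fin.ext (by omega))
    · simp only [comb, if_neg ha, if_neg (mt hsw.2 ha), Fin.mk.injEq] at hab
      exact h0 (blk r) (Fin.ext (by omega))
  rw [hblk] at hsw
  exact eq_of_blk_eq_of_natCast_eq hblk
    (add_left_cancel (add_right_cancel (ZMod.eq_of_eq_zero_iff_eq_zero hsw)))

end comb

/-- A switched combination of two latin squares with disjoint letter sets is a latin
square: every row and every column of it is injective. -/
theorem stmt19 {n : ℕ} (A0 A1 : Fin n → Fin n → Fin n)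
    (hA0 : IsLatin A0) (hA1 : IsLatin A1) (S : Fin n → Fin n → ZMod 2) :
    IsLatin (comb A0 A1 S) := by
  refine ⟨comb_row_injective S hA0.1 hA1.1, fun c => ?_⟩
  rw [← comb_transpose]
  exact comb_row_injective _ hA0.transpose.1 hA1.transpose.1 c
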